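/- arXiv:2010.13563 — 3 statements merged into one kernel-verified Lean document; each statement's English description precedes it below -/
import Mathlib

section
/- Let M_l, M_r, A_l, A_r be square matrices (over a ring) satisfying M_l^{N-1} = M_r^{N-1} = 0, M_l M_r = M_r M_l = 0, A_l² = A_r² = 0, A_l M_l = A_r M_r = 0, and M_l A_r = M_r A_l = 0. Then the operator R := (Σ_{i=0}^{N-2} M_r^i A_r) + (Σ_{i=0}^{N-2} M_l^i A_l) satisfies, for every even n ≥ 2, R^n = (Σ_{i=0}^{N-2} M_r^i A_r · Σ_{i=0}^{N-2} M_l^i A_l)^{n/2} + (Σ_{i=0}^{N-2} M_l^i A_l · Σ_{i=0}^{N-2} M_r^i A_r)^{n/2}. -/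
/-- Structural cancellation relations imply the even-power formula for
`R = ∑ M_r^i A_r + ∑ M_l^i A_l`. -/
theorem stmt1 {R : Type*} [Ring R] (N : ℕ) (hN : 2 ≤ N)
    (Ml Mr Al Ar : R)
    (hMl : Ml ^ (N - 1) = 0) (hMr : Mr ^ (N - 1) = 0)
    (hMlMr : Ml * Mr = 0) (hMrMl : Mr * Ml = 0)
    (hAl2 : Al * Al = 0) (hAr2 : Ar * Ar = 0)
    (hAlMl : Al * Ml = 0) (hArMr : Ar * Mr = 0)
    (hMlAr : Ml * Ar = 0) (hMrAl : Mr * Al = 0) :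
    ∀ n : ℕ, 2 ≤ n → Even n →
      ((∑ i ∈ Finset.range (N - 1), Mr ^ i * Ar) +
        (∑ i ∈ Finset.range (N - 1), Ml ^ i * Al)) ^ n =
      ((∑ i ∈ Finset.range (N - 1), Mr ^ i * Ar) *
        (∑ i ∈ Finset.range (N - 1), Ml ^ i * Al)) ^ (n / 2) +
      ((∑ i ∈ Finset.range (N - 1), Ml ^ i * Al) *
        (∑ i ∈ Finset.range (N - 1), Mr ^ i * Ar)) ^ (n / 2) := by
  set B := ∑ i ∈ Finset.range (N - 1), Mr ^ i * Ar with hB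
  set C := ∑ i ∈ Finset.range (N - 1), Ml ^ i * Al with hC
  have hArMrp : ∀ j : ℕ, Ar * Mr ^ j * Ar = 0 := by
    intro j
    cases j with
    | zero => simpa using hAr2
    | succ j => rw [pow_succ', ← mul_assoc, hArMr, zero_mul, zero_mul]
  have hAlMlp : ∀ j : ℕ, Al * Ml ^ j * Al = 0 := by
    intro j
    cases j with
    | zero => simpa using hAl2
    | succ j => rw [pow_succ', ← mul_assoc, hAlMl, zero_mul, zero_mul]
  have hB2 : B * B = 0 := by
    rw [hB, Finset.sum_mul_sum]
    apply Finset.sum_eq_zero; intro i _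
    apply Finset.sum_eq_zero; intro j _
    have : Ar * (Mr ^ j * Ar) = 0 := by rw [← mul_assoc, hArMrp]
    rw [mul_assoc, this, mul_zero]
  have hC2 : C * C = 0 := by
    rw [hC, Finset.sum_mul_sum]
    apply Finset.sum_eq_zero; intro i _
    apply Finset.sum_eq_zero; intro j _
    have : Al * (Ml ^ j * Al) = 0 := by rw [← mul_assoc, hAlMlp]
    rw [mul_assoc, this, mul_zero]
  have hsq : (B + C) ^ 2 = B * C + C * B := by
    rw [pow_two]
    rw [add_mul, mul_add, mul_add, hB2, hC2]
    abel
  have key : ∀ k : ℕ, (B + C) ^ (2 * (k + 1)) = (B * C) ^ (k + 1) + (C * B) ^ (k + 1) := by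
    intro k
    induction k with
    | zero => simpa using hsq
    | succ k ih =>
      have : 2 * (k + 1 + 1) = 2 * (k + 1) + 2 := by ring
      rw [this, pow_add, ih, hsq]
      have h1 : (B * C) ^ (k + 1) * (C * B) = 0 := by
        rw [pow_succ, mul_assoc, mul_assoc]
        have : C * (C * B) = 0 := by rw [← mul_assoc, hC2, zero_mul]
        rw [this, mul_zero, mul_zero]
      have h2 : (C * B) ^ (k + 1) * (B * C) = 0 := by
        rw [pow_succ, mul_assoc, mul_assoc]
        have : B * (B * C) = 0 := by rw [← mul_assoc, hB2, zero_mul]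
        rw [this, mul_zero, mul_zero]
      rw [add_mul, mul_add, mul_add, h1, h2, ← pow_succ, ← pow_succ]
      abel
  intro n hn he
  obtain ⟨m, hm⟩ := he
  have hm' : n = 2 * m := by omega
  obtain ⟨k, hk⟩ : ∃ k, m = k + 1 := ⟨m - 1, by omega⟩
  subst hk
  subst hm'
  rw [key k]
  have h2 : 2 * (k + 1) / 2 = k + 1 := by omega
  rw [h2]
end

section
/- Let M_l, M_r, A_l, A_r satisfy the relations M_l^{N-1} = M_r^{N-1} = 0, M_l M_r = M_r M_l = 0, A_l² = A_r² = 0, A_l M_l = A_r M_r = 0, M_l A_r = M_r A_l = 0, and set T = M_l + A_l + M_r + A_r, T_OSDS = M_l + M_r. Then Id - T_OSDS is invertible with inverse Σ_{i=0}^{N-2} (M_l + M_r)^i, and (Id - T_OSDS)^{-1}(T - T_OSDS) = Σ_{i=0}^{N-2} M_r^i A_r + Σ_{i=0}^{N-2} M_l^i A_l. -/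
/-- With the structural cancellation relations, `Id - T_OSDS` (with
`T_OSDS = M_l + M_r`) is invertible with inverse `∑ (M_l+M_r)^i`, and
`(Id - T_OSDS)⁻¹ (T - T_OSDS) = ∑ M_r^i A_r + ∑ M_l^i A_l`. -/
theorem stmt2 {R : Type*} [Ring R] (N : ℕ) (hN : 2 ≤ N)
    (Ml Mr Al Ar : R)
    (hMl : Ml ^ (N - 1) = 0) (hMr : Mr ^ (N - 1) = 0)
    (hMlMr : Ml * Mr = 0) (hMrMl : Mr * Ml = 0)
    (hAl2 : Al * Al = 0) (hAr2 : Ar * Ar = 0)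
    (hAlMl : Al * Ml = 0) (hArMr : Ar * Mr = 0)
    (hMlAr : Ml * Ar = 0) (hMrAl : Mr * Al = 0) :
    (1 - (Ml + Mr)) * (∑ i ∈ Finset.range (N - 1), (Ml + Mr) ^ i) = 1 ∧
    (∑ i ∈ Finset.range (N - 1), (Ml + Mr) ^ i) * (1 - (Ml + Mr)) = 1 ∧
    (∑ i ∈ Finset.range (N - 1), (Ml + Mr) ^ i) *
        ((Ml + Al + Mr + Ar) - (Ml + Mr)) =
      (∑ i ∈ Finset.range (N - 1), Mr ^ i * Ar) +
      (∑ i ∈ Finset.range (N - 1), Ml ^ i * Al) := by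
  have hpow : ∀ n : ℕ, 1 ≤ n → (Ml + Mr) ^ n = Ml ^ n + Mr ^ n := by
    intro n hn
    induction n with
    | zero => omega
    | succ k ih =>
      rcases Nat.eq_or_lt_of_le hn with h | h
      · simp [← h]
      · have hk : 1 ≤ k := by omega
        rw [pow_succ, ih hk, add_mul, mul_add, mul_add, pow_succ, pow_succ]
        have h1 : Ml ^ k * Mr = 0 := by
          cases k with
          | zero => omega
          | succ m => rw [pow_succ, mul_assoc, hMlMr, mul_zero]
        have h2 : Mr ^ k * Ml = 0 := by
          cases k with
          | zero => omega
          | succ m => rw [pow_succ, mul_assoc, hMrMl, mul_zero]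
        rw [h1, h2]; abel
  have hzero : (Ml + Mr) ^ (N - 1) = 0 := by
    rw [hpow _ (by omega), hMl, hMr, add_zero]
  refine ⟨?_, ?_, ?_⟩
  · have := geom_sum_mul_neg (Ml + Mr) (N - 1)
    -- (∑) * (1 - x) = 1 - x^n ; we need the other order
    have h := mul_neg_geom_sum (Ml + Mr) (N - 1)
    rw [hzero, sub_zero] at h
    exact h
  · have h := geom_sum_mul_neg (Ml + Mr) (N - 1)
    rw [hzero, sub_zero] at h
    exact h
  · have harr : (Ml + Al + Mr + Ar) - (Ml + Mr) = Al + Ar := by abel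
    rw [harr, Finset.sum_mul, ← Finset.sum_add_distrib]
    apply Finset.sum_congr rfl
    intro i _
    cases i with
    | zero => simp [mul_add]; abel
    | succ k =>
      rw [hpow _ (by omega), add_mul, mul_add, mul_add]
      have h1 : Ml ^ (k + 1) * Ar = 0 := by
        rw [pow_succ, mul_assoc, hMlAr, mul_zero]
      have h2 : Mr ^ (k + 1) * Al = 0 := by
        rw [pow_succ, mul_assoc, hMrAl, mul_zero]
      rw [h1, h2]; abel
end

section
/- For a vanishing mode with λ > 0, subdomain widths at least H > 0 and overlap δ ≤ H/2, the entries M := e^{-λ(L-l-δ)}(1-ρ_j²)/(1-ρ_j² e^{-2λ(L-l)}) with L - l ≥ H and |ρ_j| = 1 satisfy |M| ≤ 2·e^{-λH/2}/(1 - e^{-2λH}). -/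
/-!
On the unit circle `|1 - ρ²| ≤ 2` and `|1 - ρ² q| ≥ 1 - q` for `0 ≤ q < 1`, so
`|M| ≤ 2 e^{-λ(L-l-δ)} / (1 - e^{-2λ(L-l)})`; both exponentials only grow when `L - l`
is lowered to `H` and `δ` raised to `H/2`.
-/

theorem norm_one_sub_le_two {z : ℂ} (hz : ‖z‖ ≤ 1) : ‖1 - z‖ ≤ 2 :=
  calc ‖1 - z‖ ≤ ‖(1 : ℂ)‖ + ‖z‖ := norm_sub_le _ _
    _ ≤ 2 := by rw [norm_one]; linarith

theorem sub_le_norm_one_sub_mul_ofReal {z : ℂ} (hz : ‖z‖ ≤ 1) {q : ℝ} (hq : 0 ≤ q) :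
    1 - q ≤ ‖1 - z * q‖ :=
  calc 1 - q ≤ ‖(1 : ℂ)‖ - ‖z * q‖ := by
        rw [norm_one, norm_mul, Complex.norm_of_nonneg hq]
        nlinarith [norm_nonneg z]
    _ ≤ ‖1 - z * q‖ := norm_sub_norm_le _ _

theorem norm_mul_one_sub_div_one_sub_mul_le {z : ℂ} (hz : ‖z‖ ≤ 1) {a a' q q' : ℝ}
    (ha : 0 ≤ a) (haa' : a ≤ a') (hq : 0 ≤ q) (hqq' : q ≤ q') (hq' : q' < 1) :
    ‖(a : ℂ) * (1 - z) / (1 - z * q)‖ ≤ 2 * a' / (1 - q') := by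
  have hnum : ‖(a : ℂ) * (1 - z)‖ ≤ 2 * a' := by
    rw [norm_mul, Complex.norm_of_nonneg ha]
    nlinarith [norm_one_sub_le_two hz, norm_nonneg (1 - z)]
  have hden : 1 - q' ≤ ‖1 - z * q‖ := by
    linarith [sub_le_norm_one_sub_mul_ofReal hz hq]
  rw [norm_div]
  exact div_le_div₀ (by linarith) hnum (by linarith) hden

theorem stmt7_general (lam L l δ H : ℝ) (hlam : 0 < lam) (hH : 0 < H)
    (hLl : H ≤ L - l) (hδ : δ ≤ H / 2)
    (ρj : ℂ) (hρj : ‖ρj‖ = 1) :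
    ‖((Real.exp (-lam * (L - l - δ)) : ℂ) * (1 - ρj ^ 2) /
        (1 - ρj ^ 2 * (Real.exp (-2 * lam * (L - l)) : ℂ)))‖ ≤
      2 * Real.exp (-lam * H / 2) / (1 - Real.exp (-2 * lam * H)) := by
  have hρj2 : ‖ρj ^ 2‖ ≤ 1 := by rw [norm_pow, hρj, one_pow]
  have hdecay : Real.exp (-lam * (L - l - δ)) ≤ Real.exp (-lam * H / 2) :=
    Real.exp_le_exp.2 (by nlinarith)
  have hratio : Real.exp (-2 * lam * (L - l)) ≤ Real.exp (-2 * lam * H) :=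
    Real.exp_le_exp.2 (by nlinarith)
  have hratio_lt_one : Real.exp (-2 * lam * H) < 1 :=
    Real.exp_lt_one_iff.2 (by nlinarith)
  exact norm_mul_one_sub_div_one_sub_mul_le hρj2 (Real.exp_nonneg _) hdecay
    (Real.exp_nonneg _) hratio hratio_lt_one

/-- Evanescent-mode bound on the sweep-transfer symbol
`M = e^{-λ(L-l-δ)} (1 - ρ_j²) / (1 - ρ_j² e^{-2λ(L-l)})`. -/
theorem stmt7 (lam L l δ H : ℝ) (hlam : 0 < lam) (hH : 0 < H)
    (hLl : H ≤ L - l) (hδ0 : 0 < δ) (hδ : δ ≤ H / 2)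
    (ρj : ℂ) (hρj : ‖ρj‖ = 1)
    (hden : ρj ^ 2 * (Real.exp (-2 * lam * (L - l)) : ℂ) ≠ 1) :
    ‖((Real.exp (-lam * (L - l - δ)) : ℂ) * (1 - ρj ^ 2) /
        (1 - ρj ^ 2 * (Real.exp (-2 * lam * (L - l)) : ℂ)))‖ ≤
      2 * Real.exp (-lam * H / 2) / (1 - Real.exp (-2 * lam * H)) :=
  stmt7_general lam L l δ H hlam hH hLl hδ ρj hρj
end
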